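/- arXiv:2006.10076 — 2 statements merged into one kernel-verified Lean document; each statement's English description precedes it below -/
import Mathlib

section
/- Let P be a rational d-polytope, T a boundary triangulation of P with denominator q, and (a,ℓ) ∈ ℤ^{d+1} with a/ℓ an interior point of P (ℓ a positive integer). Then for each face Δ of T with integral ray generators W = {(r_1,q),…,(r_{m+1},q)} of cone(Δ) at height q, one has B(Δ;z) = z^{q(dim Δ + 1)} B(Δ;1/z), and, with Δ' corresponding to the generator set W ∪ {(a,ℓ)}, one has B(Δ';z) = z^{q(dim Δ + 1) + ℓ} B(Δ';1/z). -/
open scoped BigOperators Pointwise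

namespace RationalEhrhart

/-- A point of `ℝ^m` is a lattice point if all its coordinates are integers. -/
def IsLatticePt {m : ℕ} (v : Fin m → ℝ) : Prop := ∀ i, ∃ n : ℤ, v i = (n : ℝ)

/-- Lattice points of `ℝ^d × ℝ = ℝ^{d+1}`. -/
def IsLatticePtC {d : ℕ} (p : (Fin d → ℝ) × ℝ) : Prop :=
  (∀ i, ∃ n : ℤ, p.1 i = (n : ℝ)) ∧ ∃ n : ℤ, p.2 = (n : ℝ)

/-- `P` is a polytope: the convex hull of finitely many points. -/
def IsPolytope {d : ℕ} (P : Set (Fin d → ℝ)) : Prop :=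
  ∃ V : Finset (Fin d → ℝ), P = convexHull ℝ (V : Set (Fin d → ℝ))

/-- `P` is a rational polytope: the convex hull of finitely many rational points. -/
def IsRationalPolytope {d : ℕ} (P : Set (Fin d → ℝ)) : Prop :=
  ∃ V : Finset (Fin d → ℝ), (∀ v ∈ V, ∀ i, ∃ r : ℚ, v i = (r : ℝ)) ∧
    P = convexHull ℝ (V : Set (Fin d → ℝ))

/-- `P` is a lattice polytope: the convex hull of finitely many lattice points. -/
def IsLatticePolytope {d : ℕ} (P : Set (Fin d → ℝ)) : Prop :=
  ∃ V : Finset (Fin d → ℝ), (∀ v ∈ V, IsLatticePt v) ∧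
    P = convexHull ℝ (V : Set (Fin d → ℝ))

/-- `q` clears all coordinate denominators of every point of `S`. -/
def ClearsDenoms {d : ℕ} (q : ℕ) (S : Set (Fin d → ℝ)) : Prop :=
  ∀ v ∈ S, ∀ i, ∃ n : ℤ, (q : ℝ) * v i = (n : ℝ)

/-- `q` is the denominator (the lcm of all coordinate denominators) of the points of `S`. -/
def IsDenominator {d : ℕ} (q : ℕ) (S : Set (Fin d → ℝ)) : Prop :=
  0 < q ∧ ClearsDenoms q S ∧ ∀ q' : ℕ, 0 < q' → ClearsDenoms q' S → q ∣ q'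

/-- The number of lattice points in the `t`-th dilate of `P`. -/
noncomputable def latticeCount {d : ℕ} (P : Set (Fin d → ℝ)) (t : ℕ) : ℕ :=
  Set.ncard {v : Fin d → ℝ | v ∈ (t : ℝ) • P ∧ IsLatticePt v}

/-- The Ehrhart series `Ehr(P;z) = ∑_{t ≥ 0} #(tP ∩ ℤ^d) z^t` of `P`. -/
noncomputable def ehr {d : ℕ} (P : Set (Fin d → ℝ)) : PowerSeries ℤ :=
  PowerSeries.mk fun t => (latticeCount P t : ℤ)

/-- The integral generator `(q·v, q)` at height `q` of the ray through `(v,1)`. -/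
def rayGen {d : ℕ} (q : ℕ) (v : Fin d → ℝ) : (Fin d → ℝ) × ℝ := ((q : ℝ) • v, (q : ℝ))

/-- The open parallelepiped (box) spanned by the height-`q` ray generators of the face
with vertex set `Ω`. -/
def faceBox {d : ℕ} (q : ℕ) (Ω : Finset (Fin d → ℝ)) : Set ((Fin d → ℝ) × ℝ) :=
  {p | ∃ lam : (Fin d → ℝ) → ℝ, (∀ v ∈ Ω, 0 < lam v ∧ lam v < 1) ∧
        p = ∑ v ∈ Ω, lam v • rayGen q v}

/-- The open parallelepiped spanned by the height-`q` ray generators of the face with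
vertex set `Ω` together with one extra generator `w` (the interior direction `(a,ℓ)`). -/
def faceBoxA {d : ℕ} (q : ℕ) (w : (Fin d → ℝ) × ℝ) (Ω : Finset (Fin d → ℝ)) :
    Set ((Fin d → ℝ) × ℝ) :=
  {p | ∃ (lam : (Fin d → ℝ) → ℝ) (c : ℝ), (∀ v ∈ Ω, 0 < lam v ∧ lam v < 1) ∧
        0 < c ∧ c < 1 ∧ p = (∑ v ∈ Ω, lam v • rayGen q v) + c • w}

/-- The generating function `∑_{p ∈ S ∩ ℤ^{d+1}} z^{u(p)}` of the last coordinates of the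
lattice points of `S ⊆ ℝ^{d+1}`, as a polynomial (for `S` with nonnegative heights). -/
noncomputable def genPoly {d : ℕ} (S : Set ((Fin d → ℝ) × ℝ)) : Polynomial ℤ :=
  ∑ᶠ p ∈ {p | p ∈ S ∧ IsLatticePtC p}, Polynomial.X ^ (⌊p.2⌋.toNat)

/-- The generating function `∑_{p ∈ S ∩ ℤ^{d+1}} z^{u(p)}` as a Laurent polynomial. -/
noncomputable def genLaurent {d : ℕ} (S : Set ((Fin d → ℝ) × ℝ)) : LaurentPolynomial ℤ :=
  ∑ᶠ p ∈ {p | p ∈ S ∧ IsLatticePtC p}, LaurentPolynomial.T ⌊p.2⌋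

/-- The generating function `∑_{p ∈ S ∩ ℤ^{d+1}} z^{-u(p)}`, i.e. the substitution
`z ↦ 1/z` applied to `genLaurent S`. -/
noncomputable def genLaurentInv {d : ℕ} (S : Set ((Fin d → ℝ) × ℝ)) : LaurentPolynomial ℤ :=
  ∑ᶠ p ∈ {p | p ∈ S ∧ IsLatticePtC p}, LaurentPolynomial.T (-⌊p.2⌋)

/-- The box polynomial `B(Ω;z)` of a face `Ω` (with respect to height `q`);
note `boxPoly q ∅ = 1`. -/
noncomputable def boxPoly {d : ℕ} (q : ℕ) (Ω : Finset (Fin d → ℝ)) : Polynomial ℤ :=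
  genPoly (faceBox q Ω)

/-- The box polynomial `B(Ω';z)` of a face `Ω` augmented by the generator `w = (a,ℓ)`. -/
noncomputable def boxPolyA {d : ℕ} (q : ℕ) (w : (Fin d → ℝ) × ℝ) (Ω : Finset (Fin d → ℝ)) :
    Polynomial ℤ :=
  genPoly (faceBoxA q w Ω)

/-- The `h`-polynomial of the face `Ω` in the simplicial complex with face set `K`
(which should contain the empty face), triangulating a polytope of dimension `D`:
`h(Ω;z) = (1−z)^{D−dim Ω} ∑_{Ω ⊆ Φ ∈ K} (z/(1−z))^{dim Φ − dim Ω}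
        = ∑_{Ω ⊆ Φ ∈ K} z^{#Φ − #Ω} (1−z)^{D+1−#Φ}`, where `dim Φ = #Φ − 1`. -/
noncomputable def hPoly {d : ℕ} (D : ℕ) (K : Set (Finset (Fin d → ℝ)))
    (Ω : Finset (Fin d → ℝ)) : Polynomial ℤ :=
  ∑ᶠ Φ ∈ {Φ | Φ ∈ K ∧ Ω ⊆ Φ},
    Polynomial.X ^ (Φ.card - Ω.card) * (1 - Polynomial.X) ^ (D + 1 - Φ.card)

/-- The face set of a simplicial complex, together with the empty face. -/
def facesE {d : ℕ} (K : Geometry.SimplicialComplex ℝ (Fin d → ℝ)) :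
    Set (Finset (Fin d → ℝ)) :=
  insert ∅ K.faces

/-- Extended coefficient function of a polynomial, defined for all integer indices. -/
noncomputable def coeffZ (p : Polynomial ℤ) (m : ℤ) : ℤ :=
  if 0 ≤ m then p.coeff m.toNat else 0

/-- `p(z) = z^N · p(1/z)` as an identity of Laurent polynomials, expressed through
coefficients: the coefficient of `z^m` on the left is `coeffZ p m`, on the right it is
`coeffZ p (N−m)`. -/
def IsPalin (N : ℤ) (p : Polynomial ℤ) : Prop :=
  ∀ m : ℤ, coeffZ p m = coeffZ p (N - m)

/-- The polar dual polytope `P* = {y : ⟨y,x⟩ ≤ 1 for all x ∈ P}`. -/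
def polarDual {d : ℕ} (P : Set (Fin d → ℝ)) : Set (Fin d → ℝ) :=
  {y | ∀ x ∈ P, ∑ i, y i * x i ≤ 1}

/-!
The map `∑ λ_v (r_v, q) ↦ ∑ (1 - λ_v) (r_v, q)` (and `λ_w ↦ 1 - λ_w` on the extra generator)
is the point reflection `p ↦ c - p` of the open box about its centre `c / 2`, where `c` is the
sum of the generators. Since `c` is a lattice point, the reflection permutes the lattice points
of the box and sends height `u` to `u(c) - u`, which is the claimed palindromicity with
`u(c) = q·#Δ` (resp. `q·#Δ + ℓ`).
-/

def latticeC (d : ℕ) : AddSubgroup ((Fin d → ℝ) × ℝ) where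
  carrier := {p | IsLatticePtC p}
  zero_mem' := ⟨fun _ => ⟨0, by simp⟩, ⟨0, by simp⟩⟩
  add_mem' := by
    rintro p r ⟨hp₁, m, hm⟩ ⟨hr₁, n, hn⟩
    refine ⟨fun i => ?_, m + n, by simp [hm, hn]⟩
    obtain ⟨m', hm'⟩ := hp₁ i
    obtain ⟨n', hn'⟩ := hr₁ i
    exact ⟨m' + n', by simp [hm', hn']⟩
  neg_mem' := by
    rintro p ⟨hp₁, m, hm⟩
    refine ⟨fun i => ?_, -m, by simp [hm]⟩
    obtain ⟨m', hm'⟩ := hp₁ i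
    exact ⟨-m', by simp [hm']⟩

lemma rayGen_mem_latticeC {d q : ℕ} {v : Fin d → ℝ}
    (hv : ∀ i, ∃ n : ℤ, (q : ℝ) * v i = (n : ℝ)) : rayGen q v ∈ latticeC d :=
  ⟨hv, q, by simp [rayGen]⟩

lemma sum_rayGen_snd {d : ℕ} (q : ℕ) (Ω : Finset (Fin d → ℝ)) :
    (∑ v ∈ Ω, rayGen q v).2 = ((q * Ω.card : ℤ) : ℝ) := by
  simp [Prod.snd_sum, rayGen, mul_comm]

lemma genLaurent_eq_T_mul_genLaurentInv {d : ℕ} {S : Set ((Fin d → ℝ) × ℝ)}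
    {c : (Fin d → ℝ) × ℝ} (hc : c ∈ latticeC d) {N : ℤ} (hN : c.2 = N)
    (hS : ∀ p ∈ S, c - p ∈ S) :
    genLaurent S = LaurentPolynomial.T N * genLaurentInv S := by
  set s := {p | p ∈ S ∧ IsLatticePtC p}
  have hmaps : Set.MapsTo (c - ·) s s := fun p hp => ⟨hS p hp.1, sub_mem hc hp.2⟩
  have hbij : Set.BijOn (c - ·) s s :=
    Set.InvOn.bijOn ⟨fun p _ => sub_sub_cancel c p, fun p _ => sub_sub_cancel c p⟩ hmaps hmaps
  have hheight : ∀ p ∈ s, ⌊(c - p).2⌋ = N + -⌊p.2⌋ := by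
    rintro p ⟨-, -, n, hn⟩
    rw [Prod.snd_sub, hN, hn, ← Int.cast_sub, Int.floor_intCast, Int.floor_intCast, sub_eq_add_neg]
  rw [genLaurentInv, mul_finsum_mem, genLaurent]
  exact (finsum_mem_eq_of_bijOn _ hbij fun p hp => by
    rw [hheight p hp, LaurentPolynomial.T_add]).symm

lemma sub_mem_faceBox {d q : ℕ} {Ω : Finset (Fin d → ℝ)} {p : (Fin d → ℝ) × ℝ}
    (hp : p ∈ faceBox q Ω) : (∑ v ∈ Ω, rayGen q v) - p ∈ faceBox q Ω := by
  obtain ⟨lam, hlam, rfl⟩ := hp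
  refine ⟨fun v => 1 - lam v, fun v hv => ⟨by linarith [hlam v hv], by linarith [hlam v hv]⟩, ?_⟩
  simp only [← Finset.sum_sub_distrib, sub_smul, one_smul]

lemma sub_mem_faceBoxA {d q : ℕ} {w : (Fin d → ℝ) × ℝ} {Ω : Finset (Fin d → ℝ)}
    {p : (Fin d → ℝ) × ℝ} (hp : p ∈ faceBoxA q w Ω) :
    (∑ v ∈ Ω, rayGen q v + w) - p ∈ faceBoxA q w Ω := by
  obtain ⟨lam, t, hlam, ht₀, ht₁, rfl⟩ := hp
  refine ⟨fun v => 1 - lam v, 1 - t,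
    fun v hv => ⟨by linarith [hlam v hv], by linarith [hlam v hv]⟩, by linarith, by linarith, ?_⟩
  simp only [sub_smul, one_smul, Finset.sum_sub_distrib]
  abel

lemma clearsDenoms_of_mem_facesE {d q : ℕ} {K : Geometry.SimplicialComplex ℝ (Fin d → ℝ)}
    (hq : ClearsDenoms q K.vertices) {Δ : Finset (Fin d → ℝ)} (hΔ : Δ ∈ facesE K) :
    ∀ v ∈ Δ, ∀ i, ∃ n : ℤ, (q : ℝ) * v i = (n : ℝ) := by
  rcases hΔ with rfl | hΔ
  · simp
  · exact fun v hv => hq v (K.down_closed hΔ (Finset.singleton_subset_iff.mpr hv)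
      (Finset.singleton_nonempty v))

theorem box_polynomial_symmetry_boundary_general {d : ℕ}
    (K : Geometry.SimplicialComplex ℝ (Fin d → ℝ))
    (q : ℕ) (hq : IsDenominator q K.vertices)
    (a : Fin d → ℝ) (ha : IsLatticePt a) (ℓ : ℕ) :
    ∀ Δ ∈ facesE K,
      genLaurent (faceBox q Δ)
          = LaurentPolynomial.T ((q : ℤ) * Δ.card) * genLaurentInv (faceBox q Δ) ∧
      genLaurent (faceBoxA q (a, (ℓ : ℝ)) Δ)
          = LaurentPolynomial.T ((q : ℤ) * Δ.card + ℓ) *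
              genLaurentInv (faceBoxA q (a, (ℓ : ℝ)) Δ) := by
  intro Δ hΔ
  have hc : ∑ v ∈ Δ, rayGen q v ∈ latticeC d := sum_mem fun v hv =>
    rayGen_mem_latticeC (clearsDenoms_of_mem_facesE hq.2.1 hΔ v hv)
  have hw : ((a, (ℓ : ℝ)) : (Fin d → ℝ) × ℝ) ∈ latticeC d := ⟨ha, ℓ, by simp⟩
  refine ⟨genLaurent_eq_T_mul_genLaurentInv hc (sum_rayGen_snd q Δ) fun _ => sub_mem_faceBox,
    genLaurent_eq_T_mul_genLaurentInv (add_mem hc hw) ?_ fun _ => sub_mem_faceBoxA⟩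
  rw [Prod.snd_add, sum_rayGen_snd]
  push_cast
  rfl

/-- **Symmetry of box polynomials for boundary triangulations** (Corollary
`symmetry box polynomials`).  Let `P` be a rational `d`-polytope, `T` (realized by the
simplicial complex `K` with underlying space `∂P`) a boundary triangulation of `P`
with denominator `q`, and `(a,ℓ) ∈ ℤ^{d+1}` with `a/ℓ` an interior point of `P`.
Then for each face `Δ` of `T` one has `B(Δ;z) = z^{q(dim Δ + 1)} B(Δ;1/z)` and, with
`Δ'` corresponding to the generator set `W ∪ {(a,ℓ)}`,
`B(Δ';z) = z^{q(dim Δ + 1) + ℓ} B(Δ';1/z)` (identities of Laurent polynomials, with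
`q(dim Δ + 1) = q·#Δ`). -/
theorem box_polynomial_symmetry_boundary {d : ℕ} (P : Set (Fin d → ℝ))
    (hP : IsRationalPolytope P) (hdim : affineSpan ℝ P = ⊤)
    (K : Geometry.SimplicialComplex ℝ (Fin d → ℝ)) (hspace : K.space = frontier P)
    (q : ℕ) (hq : IsDenominator q K.vertices)
    (a : Fin d → ℝ) (ha : IsLatticePt a) (ℓ : ℕ) (hℓ : 0 < ℓ)
    (hint : (ℓ : ℝ)⁻¹ • a ∈ interior P) :
    ∀ Δ ∈ facesE K,
      genLaurent (faceBox q Δ)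
          = LaurentPolynomial.T ((q : ℤ) * Δ.card) * genLaurentInv (faceBox q Δ) ∧
      genLaurent (faceBoxA q (a, (ℓ : ℝ)) Δ)
          = LaurentPolynomial.T ((q : ℤ) * Δ.card + ℓ) *
              genLaurentInv (faceBoxA q (a, (ℓ : ℝ)) Δ) :=
  box_polynomial_symmetry_boundary_general K q hq a ha ℓ

end RationalEhrhart
end

section
/- Let P be a rational d-polytope, T a boundary triangulation of P with denominator q, and (a,ℓ) ∈ ℤ^{d+1} with a/ℓ an interior point of P. Given a lattice point v ∈ cone(P), let Δ = Δ(v) be the minimal face of T such that v ∈ cone(Δ'), with integral ray generators (r_1,q),…,(r_{m+1},q) at height q, write v = Σ_i λ_i (r_i,q) + λ(a,ℓ) with λ_i > 0, λ ≥ 0, let I(v) = {i : λ_i ∈ ℤ}, and set {v} = Σ_{i ∉ I(v)} {λ_i}(r_i,q) + {λ}(a,ℓ) (using fractional parts). Then v can be written uniquely in the form v = {v} + Σ_{i ∈ I(v)} (r_i,q) + Σ_{i=1}^{m+1} μ_i (r_i,q) + μ(a,ℓ) with μ, μ_1, …, μ_{m+1} nonnegative integers. -/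
/-!
Because `a/ℓ` is an interior point of `P` while every face of `T` lies in `∂P`, the point `a/ℓ`
is not in the affine span of any face `Δ`; together with the affine independence of the vertices
of `Δ` this makes the generators `(rᵢ,q)` and `(a,ℓ)` linearly independent. Existence comes from
splitting each coefficient as `λᵢ = {λᵢ} + [λᵢ ∈ ℤ] + (⌈λᵢ⌉ - 1)` and `λ = {λ} + ⌊λ⌋`;
uniqueness from the linear independence.
-/

open scoped BigOperators Pointwise

namespace RationalEhrhart

open scoped Classical

/-- The cone generated by the height-`q` ray generators of the face with vertex set `Δ`
together with the extra generator `w = (a,ℓ)` (this is `cone(Δ')`). -/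
def coneA {d : ℕ} (q : ℕ) (w : (Fin d → ℝ) × ℝ) (Δ : Finset (Fin d → ℝ)) :
    Set ((Fin d → ℝ) × ℝ) :=
  {p | ∃ (lam : (Fin d → ℝ) → ℝ) (c : ℝ), (∀ v ∈ Δ, 0 ≤ lam v) ∧ 0 ≤ c ∧
        p = (∑ v ∈ Δ, lam v • rayGen q v) + c • w}

open Filter Topology in
theorem _root_.Convex.notMem_affineSpan_of_convexHull_subset_frontier {E : Type*}
    [AddCommGroup E] [Module ℝ E] [TopologicalSpace E] [IsTopologicalAddGroup E]
    [ContinuousSMul ℝ E] {P : Set E} (hP : Convex ℝ P) {s : Finset E}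
    (hs : convexHull ℝ (s : Set E) ⊆ frontier P) {x : E} (hx : x ∈ interior P) :
    x ∉ affineSpan ℝ (s : Set E) := by
  intro hxs
  obtain ⟨c, hc, hxc⟩ := eq_affineCombination_of_mem_affineSpan_of_fintype
    (p := ((↑) : s → E)) (by rwa [Subtype.range_coe])
  rw [Finset.affineCombination_eq_linear_combination _ _ _ hc] at hxc
  obtain ⟨i₀, -⟩ := Finset.univ.nonempty_of_sum_ne_zero (hc ▸ one_ne_zero : ∑ i, c i ≠ 0)
  set n : ℝ := (Fintype.card s : ℝ)
  have hn : 0 < n := Nat.cast_pos.2 (Fintype.card_pos_iff.2 ⟨i₀⟩)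
  -- `y t` runs along the line through the barycenter `y 0` of `s` and `x`
  let b : ℝ → s → ℝ := fun t i => (1 - t) * n⁻¹ + t * c i
  let y : ℝ → E := fun t => ∑ i, b t i • (i : E)
  have hb : ∀ t, ∑ i, b t i = 1 := fun t => by
    simp only [b, Finset.sum_add_distrib, ← Finset.mul_sum, hc, Finset.sum_const,
      Finset.card_univ, nsmul_eq_mul]
    field_simp
    ring
  have hy : ∀ t, y t = (1 - t) • y 0 + t • x := fun t => by
    simp only [y, b, hxc, Finset.smul_sum, smul_smul, ← Finset.sum_add_distrib, ← add_smul]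
    simp
  have hmem : ∀ t, (∀ i, 0 < b t i) → y t ∈ convexHull ℝ (s : Set E) := fun t ht =>
    (convex_convexHull ℝ _).sum_mem (fun i _ => (ht i).le) (hb t)
      fun i _ => subset_convexHull ℝ _ i.2
  have hpos : ∀ᶠ t in 𝓝 (0 : ℝ), ∀ i, 0 < b t i := by
    refine eventually_all.2 fun i => ?_
    have hcont : Continuous fun t => b t i := by fun_prop
    refine hcont.continuousAt.eventually (lt_mem_nhds ?_)
    simpa [b] using hn
  obtain ⟨t, ht, ht0 : t < 0⟩ := ((hpos.filter_mono nhdsWithin_le_nhds).and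
    (self_mem_nhdsWithin : Set.Iio (0 : ℝ) ∈ 𝓝[<] 0)).exists
  -- so `y 0 ∈ frontier P` lies strictly between `y t ∈ closure P` and `x ∈ interior P`
  have h1t : 0 < 1 - t := by linarith
  have hy0 : y 0 = (1 - t)⁻¹ • y t + (-t / (1 - t)) • x := by
    rw [hy t]
    match_scalars <;> field_simp
    ring
  have hint : y 0 ∈ interior P := by
    rw [hy0]
    refine hP.combo_closure_interior_mem_interior (frontier_subset_closure (hs (hmem t ht))) hx
      (by positivity) (div_pos (by linarith) h1t) ?_
    field_simp
    ring
  exact (hs (hmem 0 (by simpa using hpos.self_of_nhds))).2 hint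

theorem _root_.AffineIndependent.eq_zero_of_sum_smul_prodMk_one_add_smul_eq_zero
    {k E : Type*} [Field k] [AddCommGroup E] [Module k E] {s : Finset E}
    (hs : AffineIndependent k ((↑) : s → E)) {x : E} (hx : x ∉ affineSpan k (s : Set E))
    {c : E → k} {t : k} (h : ∑ w ∈ s, c w • (w, (1 : k)) + t • (x, (1 : k)) = 0) :
    (∀ w ∈ s, c w = 0) ∧ t = 0 := by
  have h₁ : ∑ w ∈ s, c w • w + t • x = 0 := by simpa [Prod.fst_sum] using congrArg Prod.fst h
  have h₂ : ∑ w ∈ s, c w + t = 0 := by simpa [Prod.snd_sum] using congrArg Prod.snd h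
  obtain rfl : t = 0 := by
    by_contra ht
    have hsum : ∑ w ∈ s, -c w / t = 1 := by
      rw [← Finset.sum_div, Finset.sum_neg_distrib, eq_neg_of_add_eq_zero_left h₂, neg_neg,
        div_self ht]
    have hxc : x = ∑ w ∈ s, (-c w / t) • w := by
      simp only [div_eq_inv_mul, mul_smul, ← Finset.smul_sum, neg_smul, Finset.sum_neg_distrib,
        eq_neg_of_add_eq_zero_left h₁, neg_neg, smul_smul, inv_mul_cancel₀ ht, one_smul]
    refine hx ?_
    rw [hxc, ← Finset.affineCombination_eq_linear_combination _ _ _ hsum,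
      ← Set.image_id (s : Set E)]
    exact affineCombination_mem_affineSpan_image hsum (fun w hw hw' => absurd hw hw') id
  exact ⟨hs.eq_zero_of_sum_eq_zero_subtype (by simpa using h₂) (by simpa using h₁), rfl⟩

theorem eq_zero_of_sum_smul_rayGen_add_smul_eq_zero {d q ℓ : ℕ} (hq : 0 < q) (hℓ : 0 < ℓ)
    {Δ : Finset (Fin d → ℝ)} (hΔ : AffineIndependent ℝ ((↑) : Δ → Fin d → ℝ))
    {a : Fin d → ℝ} (ha : (ℓ : ℝ)⁻¹ • a ∉ affineSpan ℝ (Δ : Set (Fin d → ℝ)))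
    {c : (Fin d → ℝ) → ℝ} {t : ℝ} (h : ∑ w ∈ Δ, c w • rayGen q w + t • (a, (ℓ : ℝ)) = 0) :
    (∀ w ∈ Δ, c w = 0) ∧ t = 0 := by
  have hgen : ∀ w : Fin d → ℝ, rayGen q w = (q : ℝ) • (w, (1 : ℝ)) := fun w => by simp [rayGen]
  have hgen₀ : (a, (ℓ : ℝ)) = (ℓ : ℝ) • ((ℓ : ℝ)⁻¹ • a, (1 : ℝ)) := by
    simp [smul_smul, mul_inv_cancel₀ (Nat.cast_ne_zero.2 hℓ.ne' : (ℓ : ℝ) ≠ 0)]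
  obtain ⟨hc, ht⟩ := hΔ.eq_zero_of_sum_smul_prodMk_one_add_smul_eq_zero ha
    (c := fun w => c w * q) (t := t * ℓ) (by simpa only [hgen, hgen₀, smul_smul] using h)
  exact ⟨fun w hw => by simpa [hq.ne'] using hc w hw, by simpa [hℓ.ne'] using ht⟩

theorem affineIndependent_of_mem_facesE {d : ℕ} {K : Geometry.SimplicialComplex ℝ (Fin d → ℝ)}
    {Δ : Finset (Fin d → ℝ)} (hΔ : Δ ∈ facesE K) :
    AffineIndependent ℝ ((↑) : Δ → Fin d → ℝ) := by
  rcases hΔ with rfl | hΔ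
  · exact affineIndependent_of_subsingleton _ _
  · exact K.indep hΔ

theorem convexHull_subset_space_of_mem_facesE {d : ℕ}
    {K : Geometry.SimplicialComplex ℝ (Fin d → ℝ)} {Δ : Finset (Fin d → ℝ)}
    (hΔ : Δ ∈ facesE K) : convexHull ℝ (Δ : Set (Fin d → ℝ)) ⊆ K.space := by
  rcases hΔ with rfl | hΔ
  · simp
  · exact K.convexHull_subset_space hΔ

theorem fract_add_ite_add_natCeil_sub_one {R : Type*} [Field R] [LinearOrder R]
    [IsStrictOrderedRing R] [FloorRing R] {x : R} (hx : 0 < x) :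
    Int.fract x + (if ∃ n : ℤ, x = n then 1 else 0) + ((⌈x⌉₊ - 1 : ℕ) : R) = x := by
  rw [Nat.cast_sub (Nat.one_le_ceil_iff.2 hx), natCast_ceil_eq_intCast_ceil hx.le, Nat.cast_one]
  split_ifs with hxZ
  · obtain ⟨n, rfl⟩ := hxZ
    simp
  · rw [Int.ceil_eq_add_one_sub_fract (Int.fract_ne_zero_iff.2 fun ⟨n, hn⟩ => hxZ ⟨n, hn.symm⟩)]
    ring

theorem fract_add_natFloor {R : Type*} [Field R] [LinearOrder R] [IsStrictOrderedRing R]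
    [FloorRing R] {x : R} (hx : 0 ≤ x) : Int.fract x + (⌊x⌋₊ : R) = x := by
  rw [natCast_floor_eq_intCast_floor hx, Int.fract_add_floor]

theorem sum_smul_add_smul_eq_fract_add_natCast {ι M : Type*} [AddCommGroup M] [Module ℝ M]
    {s : Finset ι} {g : ι → M} {g₀ : M} {lam : ι → ℝ} {lamA : ℝ} (hpos : ∀ i ∈ s, 0 < lam i)
    (hA : 0 ≤ lamA) :
    ∑ i ∈ s, lam i • g i + lamA • g₀ =
      ((∑ i ∈ s, Int.fract (lam i) • g i) + Int.fract lamA • g₀)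
        + (∑ i ∈ s.filter fun i => ∃ n : ℤ, lam i = n, g i)
        + (∑ i ∈ s, ((⌈lam i⌉₊ - 1 : ℕ) : ℝ) • g i) + (⌊lamA⌋₊ : ℝ) • g₀ := by
  have hcoef : ∀ i ∈ s, lam i • g i = Int.fract (lam i) • g i
      + (if ∃ n : ℤ, lam i = n then g i else 0) + ((⌈lam i⌉₊ - 1 : ℕ) : ℝ) • g i := by
    intro i hi
    conv_lhs => rw [← fract_add_ite_add_natCeil_sub_one (hpos i hi)]
    simp only [add_smul, ite_smul, one_smul, zero_smul]
  have hcoefA : lamA • g₀ = Int.fract lamA • g₀ + (⌊lamA⌋₊ : ℝ) • g₀ := by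
    rw [← add_smul, fract_add_natFloor hA]
  rw [Finset.sum_congr rfl hcoef, Finset.sum_add_distrib, Finset.sum_add_distrib,
    ← Finset.sum_filter, hcoefA]
  abel

theorem eq_of_sum_natCast_smul_add_natCast_smul_eq {ι M : Type*} [AddCommGroup M]
    [Module ℝ M] {s : Finset ι} {g : ι → M} {g₀ : M}
    (hg : ∀ (c : ι → ℝ) (t : ℝ), ∑ i ∈ s, c i • g i + t • g₀ = 0 → (∀ i ∈ s, c i = 0) ∧ t = 0)
    {μ μ' : (ι → ℕ) × ℕ} (hμ : ∀ i ∉ s, μ.1 i = 0) (hμ' : ∀ i ∉ s, μ'.1 i = 0)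
    (h : ∑ i ∈ s, (μ.1 i : ℝ) • g i + (μ.2 : ℝ) • g₀ =
      ∑ i ∈ s, (μ'.1 i : ℝ) • g i + (μ'.2 : ℝ) • g₀) : μ = μ' := by
  obtain ⟨hc, ht⟩ := hg (fun i => μ.1 i - μ'.1 i) (μ.2 - μ'.2) <| by
    simp only [sub_smul, Finset.sum_sub_distrib]
    rw [← sub_eq_zero] at h
    rw [← h]
    abel
  refine Prod.ext (funext fun i => ?_) (by exact_mod_cast sub_eq_zero.1 ht)
  by_cases hi : i ∈ s
  · exact_mod_cast sub_eq_zero.1 (hc i hi)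
  · rw [hμ i hi, hμ' i hi]

theorem unique_representation_general {d : ℕ} (P : Set (Fin d → ℝ))
    (hP : IsRationalPolytope P)
    (K : Geometry.SimplicialComplex ℝ (Fin d → ℝ)) (hspace : K.space = frontier P)
    (q : ℕ) (hq : IsDenominator q K.vertices)
    (a : Fin d → ℝ) (ℓ : ℕ) (hℓ : 0 < ℓ)
    (hint : (ℓ : ℝ)⁻¹ • a ∈ interior P)
    (v : (Fin d → ℝ) × ℝ)
    (Δ : Finset (Fin d → ℝ)) (hΔ : Δ ∈ facesE K)
    (lam : (Fin d → ℝ) → ℝ) (lamA : ℝ)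
    (hpos : ∀ w ∈ Δ, 0 < lam w) (hA : 0 ≤ lamA)
    (hv : v = (∑ w ∈ Δ, lam w • rayGen q w) + lamA • (a, (ℓ : ℝ))) :
    ∃! μ : ((Fin d → ℝ) → ℕ) × ℕ,
      (∀ w, w ∉ Δ → μ.1 w = 0) ∧
      v = ((∑ w ∈ Δ, Int.fract (lam w) • rayGen q w) + Int.fract lamA • (a, (ℓ : ℝ)))
          + (∑ w ∈ Δ.filter fun w => ∃ n : ℤ, lam w = (n : ℝ), rayGen q w)
          + (∑ w ∈ Δ, (μ.1 w : ℝ) • rayGen q w) + (μ.2 : ℝ) • (a, (ℓ : ℝ)) := by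
  obtain ⟨V, -, rfl⟩ := hP
  have hindep (c : (Fin d → ℝ) → ℝ) (t : ℝ) :
      ∑ w ∈ Δ, c w • rayGen q w + t • (a, (ℓ : ℝ)) = 0 → (∀ w ∈ Δ, c w = 0) ∧ t = 0 :=
    eq_zero_of_sum_smul_rayGen_add_smul_eq_zero hq.1 hℓ (affineIndependent_of_mem_facesE hΔ)
      ((convex_convexHull ℝ _).notMem_affineSpan_of_convexHull_subset_frontier
        ((convexHull_subset_space_of_mem_facesE hΔ).trans hspace.le) hint)
  set μ : ((Fin d → ℝ) → ℕ) × ℕ := (fun w => if w ∈ Δ then ⌈lam w⌉₊ - 1 else 0, ⌊lamA⌋₊)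
  have hμ : ∑ w ∈ Δ, (μ.1 w : ℝ) • rayGen q w = ∑ w ∈ Δ, ((⌈lam w⌉₊ - 1 : ℕ) : ℝ) • rayGen q w :=
    Finset.sum_congr rfl fun w hw => by simp only [μ, if_pos hw]
  have hrepr := hv.trans (sum_smul_add_smul_eq_fract_add_natCast hpos hA)
  rw [← hμ] at hrepr
  refine ⟨μ, ⟨fun w hw => if_neg hw, hrepr⟩, fun μ' ⟨hμ', hrepr'⟩ => ?_⟩
  exact eq_of_sum_natCast_smul_add_natCast_smul_eq hindep hμ' (fun w hw => if_neg hw)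
    (by simpa only [add_assoc, add_right_inj] using hrepr'.symm.trans hrepr)

/-- **Unique representation lemma** (Lemma `lemma:unique sum`).  Let `P` be a rational
`d`-polytope, `T` (realized by `K`, with underlying space `∂P`) a boundary triangulation
of `P` with denominator `q`, and `(a,ℓ) ∈ ℤ^{d+1}` with `a/ℓ` an interior point of `P`.
Given a lattice point `v` in `cone(P)`, let `Δ = Δ(v)` be the minimal face of `T` such
that `v ∈ cone(Δ')`, write `v = ∑ᵢ λᵢ (rᵢ,q) + λ(a,ℓ)` with `λᵢ > 0`, `λ ≥ 0`, let
`I(v) = {i : λᵢ ∈ ℤ}` and `{v} = ∑_{i ∉ I(v)} {λᵢ}(rᵢ,q) + {λ}(a,ℓ)` (fractional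
parts).  Then `v` can be written **uniquely** in the form
`v = {v} + ∑_{i ∈ I(v)} (rᵢ,q) + ∑ᵢ μᵢ (rᵢ,q) + μ(a,ℓ)` with `μ, μᵢ` nonnegative
integers. -/
theorem unique_representation {d : ℕ} (P : Set (Fin d → ℝ))
    (hP : IsRationalPolytope P) (hdim : affineSpan ℝ P = ⊤)
    (K : Geometry.SimplicialComplex ℝ (Fin d → ℝ)) (hspace : K.space = frontier P)
    (q : ℕ) (hq : IsDenominator q K.vertices)
    (a : Fin d → ℝ) (ha : IsLatticePt a) (ℓ : ℕ) (hℓ : 0 < ℓ)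
    (hint : (ℓ : ℝ)⁻¹ • a ∈ interior P)
    (v : (Fin d → ℝ) × ℝ) (hvlat : IsLatticePtC v)
    (Δ : Finset (Fin d → ℝ)) (hΔ : Δ ∈ facesE K)
    (hvΔ : v ∈ coneA q (a, (ℓ : ℝ)) Δ)
    (hminimal : ∀ Δ₀ ∈ facesE K, v ∈ coneA q (a, (ℓ : ℝ)) Δ₀ → Δ ⊆ Δ₀)
    (lam : (Fin d → ℝ) → ℝ) (lamA : ℝ)
    (hpos : ∀ w ∈ Δ, 0 < lam w) (hA : 0 ≤ lamA)
    (hv : v = (∑ w ∈ Δ, lam w • rayGen q w) + lamA • (a, (ℓ : ℝ))) :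
    ∃! μ : ((Fin d → ℝ) → ℕ) × ℕ,
      (∀ w, w ∉ Δ → μ.1 w = 0) ∧
      v = ((∑ w ∈ Δ, Int.fract (lam w) • rayGen q w) + Int.fract lamA • (a, (ℓ : ℝ)))
          + (∑ w ∈ Δ.filter fun w => ∃ n : ℤ, lam w = (n : ℝ), rayGen q w)
          + (∑ w ∈ Δ, (μ.1 w : ℝ) • rayGen q w) + (μ.2 : ℝ) • (a, (ℓ : ℝ)) :=
  unique_representation_general P hP K hspace q hq a ℓ hℓ hint v Δ hΔ lam lamA hpos hA hv

end RationalEhrhart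
end
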